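/- For Q = {1,2,3} (distinct letters): under the stipulation that q_{12}q_{21} ≠ 1, q_{13}q_{31} ≠ 1, q_{23}q_{32} ≠ 1 (no constants in degree 2), the 6-dimensional span of words e_{σ(1)}e_{σ(2)}e_{σ(3)} contains a nonzero constant only if σ_{12} σ_{23} σ_{31} = 1, where σ_{ij} := q_{ij} q_{ji}. -/

import Mathlib

open scoped BigOperators

noncomputable section

/-- The free unital ℂ-algebra on `N` generators, realized as the monoid algebra
of the free monoid on `Fin N`. -/
abbrev FA (N : ℕ) : Type := MonoidAlgebra ℂ (FreeMonoid (Fin N))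

/-- The generator `e i`. -/
def gen {N : ℕ} (i : Fin N) : FA N :=
  MonoidAlgebra.of ℂ (FreeMonoid (Fin N)) (FreeMonoid.of i)

/-- The monomial `e_{i₁} ⋯ e_{iₙ}` attached to a word. -/
def mono {N : ℕ} (w : List (Fin N)) : FA N :=
  MonoidAlgebra.of ℂ (FreeMonoid (Fin N)) (FreeMonoid.ofList w)

/-- The q-differential on monomials: `∂ᵢ(e_j x) = δᵢⱼ x + qᵢⱼ e_j ∂ᵢ x`, `∂ᵢ 1 = 0`. -/
def Dword {N : ℕ} (q : Fin N → Fin N → ℂ) (i : Fin N) : List (Fin N) → FA N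
  | [] => 0
  | j :: w => (if i = j then mono w else 0) + q i j • (gen j * Dword q i w)

/-- The q-differential operator `∂ᵢ`, extended linearly from monomials. -/
def D {N : ℕ} (q : Fin N → Fin N → ℂ) (i : Fin N) (x : FA N) : FA N :=
  Finsupp.sum x.coeff fun w c => c • Dword q i (FreeMonoid.toList w)

/-! The coefficient of a word `v` in `∂ᵢ X` is `∑ₖ q_{i v₁} ⋯ q_{i vₖ} X(v₁ ⋯ vₖ i vₖ₊₁ ⋯)`,
so for `X` in the multilinear span the equations `∂ᵢ X = 0` are six linear
equations in its coefficients `x_{abc}`. In the paper's indexing they give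
`x_{231} = q₂₃ q₂₁ q₃₁ x_{132}` and `x_{321} = q₂₁ q₃₁ q₃₂ x_{123}` (using `σ₂₃ ≠ 1`), and then
`A = (1 - σ₁₂) x_{123}`, `B = (1 - σ₁₃) x_{132}` satisfy `A = σ₁₂ q₂₃ B` and `B = σ₁₃ q₃₂ A`.
Hence `(1 - σ₁₂ σ₂₃ σ₁₃) A = 0`; if the product is not `1`, then `A = B = 0` and all six
coefficients vanish. -/

open Finset

def transposeD {K : Type*} [CommSemiring K] {N : ℕ} (q : Fin N → Fin N → K) (i : Fin N)
    (x : List (Fin N) → K) (v : List (Fin N)) : K :=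
  ∑ k ∈ range (v.length + 1), ((v.take k).map (q i)).prod * x (v.take k ++ i :: v.drop k)

section
variable {N : ℕ}

lemma coeff_mono (w v : List (Fin N)) :
    (mono w : FA N).coeff (FreeMonoid.ofList v) = if w = v then 1 else 0 := by
  classical
  simp [mono, Finsupp.single_apply]

lemma coeff_gen_mul_nil (j : Fin N) (y : FA N) :
    (gen j * y).coeff (FreeMonoid.ofList []) = 0 := by
  rw [gen, MonoidAlgebra.of_apply, MonoidAlgebra.coeff_single_mul_of_forall_mul_ne]
  intro d h
  simpa using congrArg FreeMonoid.length h

lemma coeff_gen_mul_cons (j j' : Fin N) (y : FA N) (v : List (Fin N)) :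
    (gen j * y).coeff (FreeMonoid.ofList (j' :: v)) =
      if j = j' then y.coeff (FreeMonoid.ofList v) else 0 := by
  split_ifs with h
  · subst h
    exact (MonoidAlgebra.coeff_single_mul_mul y 1 _ _).trans (one_mul _)
  · rw [gen, MonoidAlgebra.of_apply, MonoidAlgebra.coeff_single_mul_of_forall_mul_ne]
    intro d hd
    exact h (List.cons.inj (congrArg FreeMonoid.toList hd)).1

lemma coeff_Dword (q : Fin N → Fin N → ℂ) (i : Fin N) (w v : List (Fin N)) :
    (Dword q i w).coeff (FreeMonoid.ofList v) =
      transposeD q i (fun u => if w = u then 1 else 0) v := by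
  induction w generalizing v with
  | nil => simp [Dword, transposeD]
  | cons j w ih =>
    rw [Dword, MonoidAlgebra.coeff_add, Finsupp.add_apply, MonoidAlgebra.coeff_smul_apply,
      smul_eq_mul, apply_ite (fun y : FA N => y.coeff (FreeMonoid.ofList v)), coeff_mono,
      MonoidAlgebra.coeff_zero, Finsupp.zero_apply]
    cases v with
    | nil =>
      rw [coeff_gen_mul_nil]
      simp [transposeD, eq_comm, ite_and]
    | cons j' v =>
      rw [transposeD, sum_range_succ', coeff_gen_mul_cons, ih, transposeD]
      by_cases hj : j = j' <;> simp [mul_sum, hj, ite_and, eq_comm, add_comm]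

lemma D_add (q : Fin N → Fin N → ℂ) (i : Fin N) (x y : FA N) :
    D q i (x + y) = D q i x + D q i y :=
  Finsupp.sum_add_index' (fun _ => zero_smul ℂ _) (fun _ _ _ => add_smul _ _ _)

lemma D_single (q : Fin N → Fin N → ℂ) (i : Fin N) (w : FreeMonoid (Fin N)) (c : ℂ) :
    D q i (MonoidAlgebra.single w c) = c • Dword q i w.toList :=
  Finsupp.sum_single_index (zero_smul ℂ _)

lemma coeff_D (q : Fin N → Fin N → ℂ) (i : Fin N) (X : FA N) (v : List (Fin N)) :
    (D q i X).coeff (FreeMonoid.ofList v) =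
      transposeD q i (fun u => X.coeff (FreeMonoid.ofList u)) v := by
  classical
  induction X using MonoidAlgebra.induction_linear with
  | zero => simp [D, transposeD]
  | add x y hx hy => simp [D_add, hx, hy, transposeD, mul_add, sum_add_distrib]
  | single w c =>
    simp only [D_single, MonoidAlgebra.coeff_smul_apply, coeff_Dword, transposeD, mul_sum,
      MonoidAlgebra.coeff_single, Finsupp.single_apply, smul_eq_mul, mul_ite, mul_one, mul_zero]
    refine sum_congr rfl fun k _ => ?_
    have hw : ∀ u, w = FreeMonoid.ofList u ↔ w.toList = u := fun u => ⟨(· ▸ rfl), (· ▸ rfl)⟩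
    simp only [hw, mul_comm]

lemma coeff_sum_smul_mono {ι : Type*} [Fintype ι] {word : ι → List (Fin N)}
    (hword : word.Injective) (f : ι → ℂ) (σ : ι) :
    (∑ τ, f τ • mono (word τ) : FA N).coeff (FreeMonoid.ofList (word σ)) = f σ := by
  classical
  simp [MonoidAlgebra.coeff_sum, coeff_mono, hword.eq_iff]
end

lemma perm_word_mem (σ : Equiv.Perm (Fin 3)) :
    [σ 0, σ 1, σ 2] ∈ [[0, 1, 2], [0, 2, 1], [1, 0, 2], [1, 2, 0], [2, 0, 1], [2, 1, 0]] := by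
  revert σ; decide

lemma perm_word_eq_zero_of_transposeD_eq_zero {K : Type*} [Field K] {q : Fin 3 → Fin 3 → K}
    (h12 : q 0 1 * q 1 0 ≠ 1) (h13 : q 0 2 * q 2 0 ≠ 1) (h23 : q 1 2 * q 2 1 ≠ 1)
    (h123 : (q 0 1 * q 1 0) * (q 1 2 * q 2 1) * (q 2 0 * q 0 2) ≠ 1)
    {x : List (Fin 3) → K} (hx : ∀ i v, transposeD q i x v = 0) (σ : Equiv.Perm (Fin 3)) :
    x [σ 0, σ 1, σ 2] = 0 := by
  have E1 := hx 0 [1, 2]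
  have E2 := hx 0 [2, 1]
  have E3 := hx 1 [0, 2]
  have E4 := hx 1 [2, 0]
  have E5 := hx 2 [0, 1]
  have E6 := hx 2 [1, 0]
  simp only [transposeD, sum_range_succ, sum_range_zero, List.length_cons, List.length_nil]
    at E1 E2 E3 E4 E5 E6
  norm_num at E1 E2 E3 E4 E5 E6
  have n12 : 1 - q 0 1 * q 1 0 ≠ 0 := sub_ne_zero.mpr h12.symm
  have n13 : 1 - q 0 2 * q 2 0 ≠ 0 := sub_ne_zero.mpr h13.symm
  have n23 : 1 - q 1 2 * q 2 1 ≠ 0 := sub_ne_zero.mpr h23.symm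
  have n123 : 1 - (q 0 1 * q 1 0) * (q 1 2 * q 2 1) * (q 2 0 * q 0 2) ≠ 0 :=
    sub_ne_zero.mpr h123.symm
  have h120 : x [1, 2, 0] = q 1 2 * q 1 0 * q 2 0 * x [0, 2, 1] := mul_left_cancel₀ n23 <| by
    linear_combination E4 - q 1 2 * E6 + q 1 2 * q 2 1 * q 2 0 * E3 - q 1 2 * q 1 0 * E5
  have h210 : x [2, 1, 0] = q 1 0 * q 2 0 * q 2 1 * x [0, 1, 2] := by
    linear_combination E6 - q 2 1 * h120 - q 2 1 * q 2 0 * E3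
  have hA : (1 - q 0 1 * q 1 0) * x [0, 1, 2] =
      q 0 1 * q 1 0 * q 1 2 * ((1 - q 0 2 * q 2 0) * x [0, 2, 1]) := by
    linear_combination E1 - q 0 1 * E3 - q 0 1 * q 0 2 * h120
  have hB : (1 - q 0 2 * q 2 0) * x [0, 2, 1] =
      q 0 2 * q 2 0 * q 2 1 * ((1 - q 0 1 * q 1 0) * x [0, 1, 2]) := by
    linear_combination E2 - q 0 2 * E5 - q 0 2 * q 0 1 * h210
  have h012 : x [0, 1, 2] = 0 := mul_left_cancel₀ (mul_ne_zero n123 n12) <| by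
    linear_combination hA + q 0 1 * q 1 0 * q 1 2 * hB
  have h021 : x [0, 2, 1] = 0 := mul_left_cancel₀ n13 <| by
    linear_combination hB + q 0 2 * q 2 0 * q 2 1 * (1 - q 0 1 * q 1 0) * h012
  have h102 : x [1, 0, 2] = 0 := by
    linear_combination E3 - q 1 0 * h012 - q 1 0 * q 1 2 * h021
  have h201 : x [2, 0, 1] = 0 := by
    linear_combination E5 - q 2 0 * h021 - q 2 0 * q 2 1 * h012
  have hσ := perm_word_mem σ
  simp only [List.mem_cons, List.not_mem_nil, or_false] at hσ
  rcases hσ with h | h | h | h | h | h <;> simp [h, h012, h021, h102, h120, h201, h210]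

lemma perm_word_injective :
    Function.Injective fun σ : Equiv.Perm (Fin 3) => [σ 0, σ 1, σ 2] := by
  decide

theorem constant_123_necessary_general {q : Fin 3 → Fin 3 → ℂ}
    (h12 : q 0 1 * q 1 0 ≠ 1) (h13 : q 0 2 * q 2 0 ≠ 1) (h23 : q 1 2 * q 2 1 ≠ 1)
    (hC : ∃ f : Equiv.Perm (Fin 3) → ℂ,
      (∑ σ : Equiv.Perm (Fin 3), f σ • mono [σ 0, σ 1, σ 2]) ≠ 0 ∧
      D q 0 (∑ σ : Equiv.Perm (Fin 3), f σ • mono [σ 0, σ 1, σ 2]) = 0 ∧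
      D q 1 (∑ σ : Equiv.Perm (Fin 3), f σ • mono [σ 0, σ 1, σ 2]) = 0 ∧
      D q 2 (∑ σ : Equiv.Perm (Fin 3), f σ • mono [σ 0, σ 1, σ 2]) = 0) :
    (q 0 1 * q 1 0) * (q 1 2 * q 2 1) * (q 2 0 * q 0 2) = 1 := by
  obtain ⟨f, hne, hD0, hD1, hD2⟩ := hC
  set X := ∑ σ : Equiv.Perm (Fin 3), f σ • mono [σ 0, σ 1, σ 2] with hX
  by_contra h123
  have hD : ∀ i, D q i X = 0 := by
    intro i
    fin_cases i <;> assumption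
  have hx : ∀ i v, transposeD q i (fun u => X.coeff (FreeMonoid.ofList u)) v = 0 := by
    intro i v
    rw [← coeff_D, hD i]
    rfl
  have hf : ∀ σ, f σ = 0 := by
    intro σ
    rw [← coeff_sum_smul_mono perm_word_injective f σ]
    exact perm_word_eq_zero_of_transposeD_eq_zero h12 h13 h23 h123 hx σ
  exact hne (by simp [hX, hf])

/-- for `Q = {1,2,3}` with `σ_{ij} := q_{ij}q_{ji}`, under the stipulation
`σ₁₂ ≠ 1`, `σ₁₃ ≠ 1`, `σ₂₃ ≠ 1` (no constants in degree two), the span of the six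
multilinear words contains a nonzero constant only if `σ₁₂ σ₂₃ σ₃₁ = 1`. -/
theorem constant_123_necessary {q : Fin 3 → Fin 3 → ℂ} (hq : ∀ i j, q i j ≠ 0)
    (h12 : q 0 1 * q 1 0 ≠ 1) (h13 : q 0 2 * q 2 0 ≠ 1) (h23 : q 1 2 * q 2 1 ≠ 1)
    (hC : ∃ f : Equiv.Perm (Fin 3) → ℂ,
      (∑ σ : Equiv.Perm (Fin 3), f σ • mono [σ 0, σ 1, σ 2]) ≠ 0 ∧
      D q 0 (∑ σ : Equiv.Perm (Fin 3), f σ • mono [σ 0, σ 1, σ 2]) = 0 ∧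
      D q 1 (∑ σ : Equiv.Perm (Fin 3), f σ • mono [σ 0, σ 1, σ 2]) = 0 ∧
      D q 2 (∑ σ : Equiv.Perm (Fin 3), f σ • mono [σ 0, σ 1, σ 2]) = 0) :
    (q 0 1 * q 1 0) * (q 1 2 * q 2 1) * (q 2 0 * q 0 2) = 1 :=
  constant_123_necessary_general h12 h13 h23 hC
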